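/- arXiv:1811.04226 — 2 statements merged into one kernel-verified Lean document; each statement's English description precedes it below -/
import Mathlib

section
/- Let A be a commutative ring which is an algebra over ℚ, I ⊆ A an ideal, and D a derivation of A with D(I) ⊆ I. Then for every a ∈ A with aⁿ ∈ I for some n ≥ 1, one has aⁿ⁻ʲ·(D a)²ʲ ∈ I for all 0 ≤ j ≤ n; in particular (D a)²ⁿ ∈ I. -/
/-- Let `A` be a commutative ring which is a `ℚ`-algebra, `I ⊆ A` an ideal,
and `D` a derivation of `A` with `D(I) ⊆ I`.  If `a ∈ A` satisfies `aⁿ ∈ I` for some `n ≥ 1`,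
then `a^(n−j)·(D a)^(2j) ∈ I` for all `0 ≤ j ≤ n`; in particular `(D a)^(2n) ∈ I`. -/
theorem derivation_pow_mem_of_pow_mem
    (A : Type*) [CommRing A] [Algebra ℚ A] (I : Ideal A)
    (D : Derivation ℚ A A) (hD : ∀ x ∈ I, D x ∈ I)
    (a : A) (n : ℕ) (hn : 1 ≤ n) (ha : a ^ n ∈ I) :
    (∀ j : ℕ, j ≤ n → a ^ (n - j) * D a ^ (2 * j) ∈ I) ∧ D a ^ (2 * n) ∈ I := by
  have main : ∀ j : ℕ, j ≤ n → a ^ (n - j) * D a ^ (2 * j) ∈ I := by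
    intro j
    induction j with
    | zero => intro _; simpa using ha
    | succ j ih =>
      intro hj
      have hjn : j < n := hj
      have hx : a ^ (n - j) * D a ^ (2 * j) ∈ I := ih (le_of_lt hjn)
      have hDx : D (a ^ (n - j) * D a ^ (2 * j)) ∈ I := hD _ hx
      obtain ⟨k, hk⟩ : ∃ k, n - j = k + 1 := ⟨n - j - 1, by omega⟩
      have hk2 : n - (j + 1) = k := by omega
      have hDxval : D (a ^ (n - j) * D a ^ (2 * j))
          = a ^ (n - j) * ((2 * j) • (D a ^ (2 * j - 1) • D (D a)))
            + D a ^ (2 * j) * ((n - j) • (a ^ (n - j - 1) • D a)) := by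
        rw [Derivation.leibniz, Derivation.leibniz_pow, Derivation.leibniz_pow]
        simp only [smul_eq_mul]
      have key : ((k + 1 : ℕ) : A) * (a ^ k * D a ^ (2 * (j + 1)))
          = D a * D (a ^ (n - j) * D a ^ (2 * j))
            - ((2 * j : ℕ) : A) * D (D a) * (a ^ (n - j) * D a ^ (2 * j)) := by
        rw [hDxval, hk]
        rcases j with _ | j'
        · simp only [Nat.mul_zero, pow_zero, zero_smul, mul_zero, zero_add, smul_eq_mul,
            nsmul_eq_mul, Nat.add_sub_cancel, Nat.cast_zero, zero_mul, sub_zero, one_mul,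
            Nat.mul_one]
          push_cast
          ring
        · have h1 : 2 * (j' + 1) - 1 = 2 * j' + 1 := by omega
          have h2 : k + 1 - 1 = k := rfl
          rw [h1, h2]
          simp only [smul_eq_mul, nsmul_eq_mul]
          push_cast
          ring
      have hy : D a * D (a ^ (n - j) * D a ^ (2 * j))
          - ((2 * j : ℕ) : A) * D (D a) * (a ^ (n - j) * D a ^ (2 * j)) ∈ I :=
        Ideal.sub_mem I (Ideal.mul_mem_left I _ hDx) (Ideal.mul_mem_left I _ hx)
      rw [← key] at hy
      have hc : (((k + 1 : ℕ) : ℚ)) ≠ 0 := by positivity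
      have hsm : (((k + 1 : ℕ) : ℚ))⁻¹ • (((k + 1 : ℕ) : A) * (a ^ k * D a ^ (2 * (j + 1))))
          = a ^ k * D a ^ (2 * (j + 1)) := by
        rw [show ((k + 1 : ℕ) : A) = algebraMap ℚ A ((k + 1 : ℕ) : ℚ) by push_cast; simp,
          ← Algebra.smul_def, inv_smul_smul₀ hc]
      have : (((k + 1 : ℕ) : ℚ))⁻¹ • (((k + 1 : ℕ) : A) * (a ^ k * D a ^ (2 * (j + 1)))) ∈ I := by
        rw [Algebra.smul_def]
        exact Ideal.mul_mem_left I _ hy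
      rw [hsm] at this
      rw [hk2]
      exact this
  refine ⟨main, ?_⟩
  have := main n le_rfl
  simpa using this
end

section
/- Let A be a commutative ring, n ≥ 1 a natural number such that (n : A) is invertible in A (for instance, A an algebra over ℚ), f ∈ A a non-zero-divisor, and D a derivation of A. Then D preserves the principal ideal generated by fⁿ if and only if D preserves the principal ideal generated by f; that is, D(⟨fⁿ⟩) ⊆ ⟨fⁿ⟩ ⟺ D(⟨f⟩) ⊆ ⟨f⟩, and equivalently D(fⁿ) ∈ ⟨fⁿ⟩ ⟺ D(f) ∈ ⟨f⟩. -/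
lemma span_singleton_pres_iff (A : Type*) [CommRing A] (D : Derivation ℤ A A) (g : A) :
    (∀ a ∈ Ideal.span {g}, D a ∈ Ideal.span {g}) ↔ D g ∈ Ideal.span {g} := by
  constructor
  · intro h
    exact h g (Ideal.mem_span_singleton_self g)
  · intro hDg a ha
    obtain ⟨c, rfl⟩ := Ideal.mem_span_singleton.mp ha
    rw [Derivation.leibniz]
    refine Ideal.add_mem _ ?_ ?_
    · exact Ideal.mul_mem_right _ _ (Ideal.mem_span_singleton_self g)
    · exact Submodule.smul_mem _ _ hDg

/-- Let `A` be a commutative ring, `n ≥ 1` with `(n : A)` invertible,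
`f ∈ A` a non-zero-divisor, and `D` a derivation of `A`.  Then `D` preserves the principal
ideal `⟨fⁿ⟩` iff it preserves `⟨f⟩`; equivalently, `D(fⁿ) ∈ ⟨fⁿ⟩ ↔ D f ∈ ⟨f⟩`. -/
theorem derivation_preserves_pow_iff_preserves
    (A : Type*) [CommRing A] (n : ℕ) (hn : 1 ≤ n) (hinv : IsUnit (n : A))
    (f : A) (hf : f ∈ nonZeroDivisors A) (D : Derivation ℤ A A) :
    ((∀ a ∈ Ideal.span {f ^ n}, D a ∈ Ideal.span {f ^ n}) ↔
      (∀ a ∈ Ideal.span {f}, D a ∈ Ideal.span {f})) ∧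
    (D (f ^ n) ∈ Ideal.span {f ^ n} ↔ D f ∈ Ideal.span {f}) := by
  have key : D (f ^ n) ∈ Ideal.span {f ^ n} ↔ D f ∈ Ideal.span {f} := by
    constructor
    · intro h
      obtain ⟨c, hc⟩ := Ideal.mem_span_singleton.mp h
      -- hc : D (f ^ n) = f ^ n * c
      rw [Derivation.leibniz_pow] at hc
      -- n • f^(n-1) • D f = f^n * c
      obtain ⟨u, hu⟩ := hinv
      have hpow : f ^ (n - 1) ∈ nonZeroDivisors A := pow_mem hf _
      have hcancel : (n : A) * D f = f * c := by
        have : f ^ (n - 1) * ((n : A) * D f) = f ^ (n - 1) * (f * c) := by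
          have hfn : f ^ n = f ^ (n - 1) * f := by
            conv_lhs => rw [← Nat.sub_add_cancel hn]
            rw [pow_succ]
          calc f ^ (n - 1) * ((n : A) * D f) = n • f ^ (n - 1) • D f := by
                simp [smul_smul, nsmul_eq_mul]; ring
            _ = f ^ n * c := hc
            _ = f ^ (n - 1) * (f * c) := by rw [hfn]; ring
        exact (mul_cancel_left_mem_nonZeroDivisors hpow).mp this
      rw [Ideal.mem_span_singleton]
      refine ⟨↑u⁻¹ * c, ?_⟩
      have : D f = ↑u⁻¹ * ((n : A) * D f) := by
        rw [← hu, ← mul_assoc, Units.inv_mul, one_mul]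
      rw [this, hcancel]; ring
    · intro h
      obtain ⟨c, hc⟩ := Ideal.mem_span_singleton.mp h
      rw [Ideal.mem_span_singleton, Derivation.leibniz_pow]
      refine ⟨(n : A) * c, ?_⟩
      have hfn : f ^ n = f ^ (n - 1) * f := by
        conv_lhs => rw [← Nat.sub_add_cancel hn]
        rw [pow_succ]
      rw [hfn]
      simp only [smul_smul, nsmul_eq_mul, smul_eq_mul, hc]
      ring
  refine ⟨?_, key⟩
  rw [span_singleton_pres_iff, span_singleton_pres_iff, key]
end
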